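/- arXiv:1403.4718 — 3 statements merged into one kernel-verified Lean document; each statement's English description precedes it below -/
import Mathlib

section
/- Let ω be a state on ℓ∞, extended to nonnegative unbounded sequences by ω̄(x) = sup { ω(y) : y ∈ ℓ∞, 0 ≤ y ≤ x }. Let z ∈ ℓ∞ be a nonnegative sequence with ω(z) = 0, and let u be a nonnegative (possibly unbounded) sequence with ω̄(u) < ∞. Then ω̄(uz) = 0, where uz is the pointwise product. -/
/-!
Fix a bounded `0 ≤ y ≤ uz` and `C > 0` with `z ≤ C`. Pointwise `uz ≤ N z + C (u - N)₊`, so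
`y ≤ N z + C w` with the bounded sequence `w = min (y / C) (u - N)₊`, and therefore
`ω y ≤ N ω z + C ω w = C ω w`. Since `min u N + w ≤ u` and the truncations `min u N` are cofinal
among the bounded sequences below `u`, `ω(min u N) → ω̄ u < ∞`, which forces `ω w → 0` as `N → ∞`.
-/
open Filter
open scoped ENNReal

/-- A sequence `x : ℕ → ℝ` is bounded (an element of `ℓ∞`). -/
def Bdd (x : ℕ → ℝ) : Prop := ∃ C, ∀ n, |x n| ≤ C

/-- A state on `ℓ∞`: a positive linear functional `ω` with `ω(1) = 1`.
We model it as a function on all sequences whose linearity and positivity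
are only required on bounded sequences. -/
structure LinfState where
  toFun : (ℕ → ℝ) → ℝ
  map_add' : ∀ x y, Bdd x → Bdd y → toFun (x + y) = toFun x + toFun y
  map_smul' : ∀ (c : ℝ) (x), Bdd x → toFun (c • x) = c * toFun x
  pos' : ∀ x, Bdd x → (∀ n, 0 ≤ x n) → 0 ≤ toFun x
  map_one' : toFun (fun _ => (1 : ℝ)) = 1

/-- The extension `ω̄` of a state `ω` to arbitrary nonnegative (possibly
unbounded) sequences, with values in `[0,∞]`:
`ω̄(x) = sup { ω(y) : y ∈ ℓ∞, 0 ≤ y ≤ x }`. -/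
noncomputable def LinfState.ext (S : LinfState) (x : ℕ → ℝ) : ℝ≥0∞ :=
  ⨆ y ∈ {y : ℕ → ℝ | Bdd y ∧ (∀ n, 0 ≤ y n) ∧ ∀ n, y n ≤ x n},
    ENNReal.ofReal (S.toFun y)

namespace Bdd

theorem const (c : ℝ) : Bdd fun _ => c := ⟨|c|, fun _ => le_rfl⟩

theorem add {x y : ℕ → ℝ} (hx : Bdd x) (hy : Bdd y) : Bdd (x + y) := by
  obtain ⟨C, hC⟩ := hx
  obtain ⟨D, hD⟩ := hy
  exact ⟨C + D, fun n => (abs_add_le _ _).trans (add_le_add (hC n) (hD n))⟩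

theorem smul {x : ℕ → ℝ} (c : ℝ) (hx : Bdd x) : Bdd (c • x) := by
  obtain ⟨C, hC⟩ := hx
  refine ⟨|c| * C, fun n => ?_⟩
  rw [Pi.smul_apply, smul_eq_mul, abs_mul]
  exact mul_le_mul_of_nonneg_left (hC n) (abs_nonneg c)

theorem sub {x y : ℕ → ℝ} (hx : Bdd x) (hy : Bdd y) : Bdd (x - y) := by
  simpa [sub_eq_add_neg] using hx.add (hy.smul (-1))

theorem of_nonneg_of_le {x y : ℕ → ℝ} (hy : Bdd y) (hx0 : ∀ n, 0 ≤ x n)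
    (hxy : ∀ n, x n ≤ y n) : Bdd x := by
  obtain ⟨C, hC⟩ := hy
  refine ⟨C, fun n => ?_⟩
  rw [abs_of_nonneg (hx0 n)]
  exact (hxy n).trans ((le_abs_self _).trans (hC n))

theorem exists_pos_bound {x : ℕ → ℝ} (hx : Bdd x) : ∃ C > 0, ∀ n, x n ≤ C := by
  obtain ⟨C, hC⟩ := hx
  exact ⟨max C 1, one_pos.trans_le (le_max_right _ _),
    fun n => (le_abs_self _).trans ((hC n).trans (le_max_left _ _))⟩

theorem min_natCast {u : ℕ → ℝ} (hu0 : ∀ n, 0 ≤ u n) (N : ℕ) : Bdd fun n => min (u n) N :=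
  (const (N : ℝ)).of_nonneg_of_le (fun n => le_min (hu0 n) N.cast_nonneg)
    fun _ => min_le_right _ _

end Bdd

theorem min_add_le_of_le_max_sub {a b w : ℝ} (hw : w ≤ max (a - b) 0) : min a b + w ≤ a := by
  rcases le_total a b with h | h
  · rw [max_eq_right (sub_nonpos.2 h)] at hw
    rw [min_eq_left h]
    linarith
  · rw [max_eq_left (sub_nonneg.2 h)] at hw
    rw [min_eq_right h]
    linarith

theorem mul_le_add_mul_max_sub {u z C N : ℝ} (hz0 : 0 ≤ z) (hzC : z ≤ C) :
    u * z ≤ N * z + C * max (u - N) 0 := by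
  have : (u - N) * z ≤ max (u - N) 0 * C :=
    (mul_le_mul_of_nonneg_right (le_max_left _ _) hz0).trans
      (mul_le_mul_of_nonneg_left hzC (le_max_right _ _))
  linarith

namespace LinfState

variable (S : LinfState)

theorem mono {x y : ℕ → ℝ} (hx : Bdd x) (hy : Bdd y) (h : ∀ n, x n ≤ y n) :
    S.toFun x ≤ S.toFun y := by
  have hsplit : S.toFun y = S.toFun x + S.toFun (y - x) := by
    rw [← S.map_add' x (y - x) hx (hy.sub hx), add_sub_cancel]
  have := S.pos' (y - x) (hy.sub hx) fun n => sub_nonneg.2 (h n)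
  linarith

theorem ofReal_le_ext {x y : ℕ → ℝ} (hy : Bdd y) (hy0 : ∀ n, 0 ≤ y n)
    (hyx : ∀ n, y n ≤ x n) : ENNReal.ofReal (S.toFun y) ≤ S.ext x :=
  le_iSup₂ (f := fun y (_ : y ∈ {y : ℕ → ℝ | Bdd y ∧ (∀ n, 0 ≤ y n) ∧ ∀ n, y n ≤ x n}) =>
    ENNReal.ofReal (S.toFun y)) y ⟨hy, hy0, hyx⟩

theorem ext_le_ofReal {x : ℕ → ℝ} {c : ℝ}
    (h : ∀ y, Bdd y → (∀ n, 0 ≤ y n) → (∀ n, y n ≤ x n) → S.toFun y ≤ c) :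
    S.ext x ≤ ENNReal.ofReal c :=
  iSup₂_le fun y ⟨hy, hy0, hyx⟩ => ENNReal.ofReal_le_ofReal (h y hy hy0 hyx)

theorem ext_eq_iSup_min {u : ℕ → ℝ} (hu0 : ∀ n, 0 ≤ u n) :
    S.ext u = ⨆ N : ℕ, ENNReal.ofReal (S.toFun fun n => min (u n) N) := by
  refine le_antisymm (iSup₂_le fun y ⟨hy, _, hyu⟩ => ?_) (iSup_le fun N =>
    S.ofReal_le_ext (Bdd.min_natCast hu0 N) (fun n => le_min (hu0 n) N.cast_nonneg)
      fun _ => min_le_left _ _)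
  obtain ⟨B, hB⟩ := hy
  refine le_iSup_of_le ⌈B⌉₊ (ENNReal.ofReal_le_ofReal
    (S.mono ⟨B, hB⟩ (Bdd.min_natCast hu0 _) fun n => le_min (hyu n) ?_))
  exact (le_abs_self _).trans ((hB n).trans (Nat.le_ceil B))

theorem exists_tail_lt {u : ℕ → ℝ} (hu0 : ∀ n, 0 ≤ u n) (huf : S.ext u < ⊤) {ε : ℝ}
    (hε : 0 < ε) : ∃ N : ℕ, ∀ w, Bdd w → (∀ n, 0 ≤ w n) →
      (∀ n, w n ≤ max (u n - N) 0) → S.toFun w < ε := by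
  have hlt : S.ext u <
      ⨆ N : ℕ, (ENNReal.ofReal (S.toFun fun n => min (u n) N) + ENNReal.ofReal ε) := by
    rw [← ENNReal.iSup_add, ← S.ext_eq_iSup_min hu0]
    exact ENNReal.lt_add_right huf.ne (ENNReal.ofReal_pos.2 hε).ne'
  obtain ⟨N, hN⟩ := lt_iSup_iff.1 hlt
  refine ⟨N, fun w hw hw0 hwu => ?_⟩
  have htrunc := Bdd.min_natCast hu0 N
  have htrunc0 : ∀ n, 0 ≤ min (u n) N := fun n => le_min (hu0 n) N.cast_nonneg
  have hsum : ENNReal.ofReal (S.toFun fun n => min (u n) N) + ENNReal.ofReal (S.toFun w) ≤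
      S.ext u := by
    rw [← ENNReal.ofReal_add (S.pos' _ htrunc htrunc0) (S.pos' w hw hw0),
      ← S.map_add' _ _ htrunc hw]
    exact S.ofReal_le_ext (htrunc.add hw) (fun n => add_nonneg (htrunc0 n) (hw0 n))
      fun n => min_add_le_of_le_max_sub (hwu n)
  exact (ENNReal.ofReal_lt_ofReal_iff hε).1
    ((ENNReal.add_lt_add_iff_left ENNReal.ofReal_ne_top).1 (hsum.trans_lt hN))

end LinfState

/-- If `z ∈ ℓ∞` is nonnegative with `ω(z) = 0` and `u` is a nonnegative
(possibly unbounded) sequence with `ω̄(u) < ∞`, then `ω̄(uz) = 0`, where `uz`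
is the pointwise product. -/
theorem extension_mul_null (S : LinfState) (z u : ℕ → ℝ)
    (hzB : Bdd z) (hz0 : ∀ n, 0 ≤ z n) (hωz : S.toFun z = 0)
    (hu0 : ∀ n, 0 ≤ u n) (huf : S.ext u < ⊤) :
    S.ext (fun n => u n * z n) = 0 := by
  obtain ⟨C, hCpos, hzC⟩ := hzB.exists_pos_bound
  refine nonpos_iff_eq_zero.1 (ENNReal.ofReal_zero ▸ S.ext_le_ofReal fun y hy hy0 hyuz => ?_)
  refine le_of_forall_pos_le_add fun δ hδ => ?_
  obtain ⟨N, hN⟩ := S.exists_tail_lt hu0 huf (div_pos hδ hCpos)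
  set w : ℕ → ℝ := fun n => min (y n / C) (max (u n - N) 0)
  have hw0 : ∀ n, 0 ≤ w n := fun n => le_min (div_nonneg (hy0 n) hCpos.le) (le_max_right _ _)
  have hw : Bdd w := (hy.smul C⁻¹).of_nonneg_of_le hw0 fun n =>
    (min_le_left _ _).trans_eq (div_eq_inv_mul _ _)
  have hyle : ∀ n, y n ≤ ((N : ℝ) • z + C • w) n := fun n => by
    have hpointwise := mul_le_add_mul_max_sub (u := u n) (N := N) (hz0 n) (hzC n)
    have hNz := mul_nonneg N.cast_nonneg (hz0 n)
    simp only [Pi.add_apply, Pi.smul_apply, smul_eq_mul, w]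
    rw [mul_min_of_nonneg _ _ hCpos.le, mul_div_cancel₀ _ hCpos.ne']
    rcases min_cases (y n) (C * max (u n - N) 0) with ⟨h, -⟩ | ⟨h, -⟩ <;> rw [h] <;>
      linarith [hyuz n]
  calc S.toFun y ≤ S.toFun ((N : ℝ) • z + C • w) :=
        S.mono hy ((hzB.smul _).add (hw.smul _)) hyle
    _ = N * S.toFun z + C * S.toFun w := by
        rw [S.map_add' _ _ (hzB.smul _) (hw.smul _), S.map_smul' _ _ hzB, S.map_smul' _ _ hw]
    _ ≤ 0 + δ := by
        rw [hωz, mul_zero, zero_add, zero_add]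
        exact ((lt_div_iff₀' hCpos).1 (hN w hw hw0 fun n => min_le_right _ _)).le
end

section
/- Let ω be a singular dilation-invariant state on ℓ∞ and let ψ : ℕ → (0,∞) be increasing, concave (in the sense that the increments ψ(n+1)−ψ(n) are nonincreasing), unbounded, and satisfy ω({ψ(2n+1)/ψ(n+1)}) = 1. For a nonincreasing nonnegative sequence c, the sequences {(1/ψ(n+1)) ∑_{k=0}^{n} c(k)}_{n≥0} ∘ σ₂-shift satisfy: σ₂({(1/ψ(2n+1)) ∑_{k=0}^{2n+1} c(k)}_{n≥0}) − {(1/ψ(n+1)) ∑_{k=0}^{n} c(k)}_{n≥0} ∈ c₀, provided sup_n (1/ψ(n+1)) ∑_{k=0}^{n} c(k) < ∞. -/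
open Filter
open scoped ENNReal

/-!
For `m = 2t` the two means share the denominator `ψ(2t+1)` and differ by the single term
`c(2t+1)/ψ(2t+1) ≤ c(0)/ψ(2t+1)`. For `m = 2t+1` they share the numerator `∑_{k ≤ 2t+1} c(k)`,
and the difference is the mean `∑_{k ≤ 2t+1} c(k)/ψ(2t+2)`, bounded by some `M`, times
`(ψ(2t+2) - ψ(2t+1))/ψ(2t+1) ≤ (ψ(1) - ψ(0))/ψ(2t+1)` by concavity.
Both bounds are `O(1/ψ(2t+1))`, which tends to `0` since `ψ` is unbounded.
-/

open Finset

lemma div_sub_div_le_mul_of_le_mul {x y p M : ℝ} (hp : 0 < p) (hpy : p ≤ y)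
    (hxy : x ≤ M * y) : x / p - x / y ≤ M * ((y - p) / p) := by
  have hy : 0 < y := hp.trans_le hpy
  calc x / p - x / y = x / y * ((y - p) / p) := by field_simp
    _ ≤ M * ((y - p) / p) :=
      mul_le_mul_of_nonneg_right ((div_le_iff₀ hy).2 hxy) (div_nonneg (sub_nonneg.2 hpy) hp.le)

section

variable {ψ c : ℕ → ℝ}

lemma sum_div_sub_sum_div_even_mem_Icc (hpos : ∀ n : ℕ, 1 ≤ n → 0 < ψ n) (hc : Antitone c)
    (hc0 : ∀ k, 0 ≤ c k) (t : ℕ) :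
    (∑ k ∈ range (2 * t + 2), c k) / ψ (2 * t + 1) - (∑ k ∈ range (2 * t + 1), c k) / ψ (2 * t + 1)
      ∈ Set.Icc 0 (c 0 / ψ (2 * t + 1)) := by
  have hψ : 0 < ψ (2 * t + 1) := hpos _ (by omega)
  rw [sum_range_succ _ (2 * t + 1), add_div, add_sub_cancel_left]
  exact ⟨div_nonneg (hc0 _) hψ.le, div_le_div_of_nonneg_right (hc (Nat.zero_le _)) hψ.le⟩

lemma sum_div_sub_sum_div_odd_mem_Icc (hpos : ∀ n : ℕ, 1 ≤ n → 0 < ψ n) (hincr : Monotone ψ)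
    (hconc : Antitone (fun n => ψ (n + 1) - ψ n)) (hc0 : ∀ k, 0 ≤ c k) {M : ℝ} (hM0 : 0 ≤ M)
    (hM : ∀ n, (∑ k ∈ range (n + 1), c k) ≤ M * ψ (n + 1)) (t : ℕ) :
    (∑ k ∈ range (2 * t + 2), c k) / ψ (2 * t + 1) - (∑ k ∈ range (2 * t + 2), c k) / ψ (2 * t + 2)
      ∈ Set.Icc 0 (M * (ψ 1 - ψ 0) / ψ (2 * t + 1)) := by
  have hψ : 0 < ψ (2 * t + 1) := hpos _ (by omega)
  have hψψ : ψ (2 * t + 1) ≤ ψ (2 * t + 2) := hincr (by omega)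
  have hsum : 0 ≤ ∑ k ∈ range (2 * t + 2), c k := sum_nonneg fun k _ => hc0 k
  have hincrement : ψ (2 * t + 2) - ψ (2 * t + 1) ≤ ψ 1 - ψ 0 := by
    simpa using hconc (Nat.zero_le (2 * t + 1))
  refine ⟨sub_nonneg.2 (div_le_div_of_nonneg_left hsum hψ hψψ), ?_⟩
  calc _ ≤ M * ((ψ (2 * t + 2) - ψ (2 * t + 1)) / ψ (2 * t + 1)) :=
        div_sub_div_le_mul_of_le_mul hψ hψψ (hM (2 * t + 1))
    _ ≤ M * ((ψ 1 - ψ 0) / ψ (2 * t + 1)) := by gcongr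
    _ = M * (ψ 1 - ψ 0) / ψ (2 * t + 1) := mul_div_assoc .. |>.symm


lemma sum_div_sub_sum_div_dilate_mem_Icc (hpos : ∀ n : ℕ, 1 ≤ n → 0 < ψ n) (hincr : Monotone ψ)
    (hconc : Antitone (fun n => ψ (n + 1) - ψ n)) (hc : Antitone c) (hc0 : ∀ k, 0 ≤ c k)
    {M : ℝ} (hM0 : 0 ≤ M) (hM : ∀ n, (∑ k ∈ range (n + 1), c k) ≤ M * ψ (n + 1)) (m : ℕ) :
    (∑ k ∈ range (2 * (m / 2) + 2), c k) / ψ (2 * (m / 2) + 1) -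
        (∑ k ∈ range (m + 1), c k) / ψ (m + 1)
      ∈ Set.Icc 0 ((c 0 + M * (ψ 1 - ψ 0)) / ψ (2 * (m / 2) + 1)) := by
  have hψ : 0 < ψ (2 * (m / 2) + 1) := hpos _ (by omega)
  have hψ01 : 0 ≤ ψ 1 - ψ 0 := sub_nonneg.2 (hincr zero_le_one)
  obtain ⟨t, rfl | rfl⟩ := Nat.even_or_odd' m
  · rw [show 2 * t / 2 = t by omega] at hψ ⊢
    refine Set.Icc_subset_Icc_right ?_ (sum_div_sub_sum_div_even_mem_Icc hpos hc hc0 t)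
    gcongr
    exact le_add_of_nonneg_right (mul_nonneg hM0 hψ01)
  · rw [show (2 * t + 1) / 2 = t by omega] at hψ ⊢
    refine Set.Icc_subset_Icc_right ?_
      (sum_div_sub_sum_div_odd_mem_Icc hpos hincr hconc hc0 hM0 hM t)
    gcongr
    exact le_add_of_nonneg_left (hc0 0)

end

theorem dilated_means_sub_means_null_general
    (ψ : ℕ → ℝ) (hpos : ∀ n : ℕ, 1 ≤ n → 0 < ψ n)
    (hincr : Monotone ψ)
    (hconc : Antitone (fun n => ψ (n + 1) - ψ n))
    (htop : Tendsto ψ atTop atTop)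
    (c : ℕ → ℝ) (hc : Antitone c) (hc0 : ∀ k, 0 ≤ c k)
    (hbdd : ∃ M : ℝ, ∀ n, (∑ k ∈ Finset.range (n + 1), c k) ≤ M * ψ (n + 1)) :
    Tendsto (fun m : ℕ =>
        (∑ k ∈ Finset.range (2 * (m / 2) + 2), c k) / ψ (2 * (m / 2) + 1) -
          (∑ k ∈ Finset.range (m + 1), c k) / ψ (m + 1))
      atTop (nhds 0) := by
  obtain ⟨M, hM⟩ := hbdd
  have hM0 : 0 ≤ M :=
    nonneg_of_mul_nonneg_left ((hc0 0).trans (by simpa using hM 0)) (hpos 1 le_rfl)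
  have hbound := sum_div_sub_sum_div_dilate_mem_Icc hpos hincr hconc hc hc0 hM0 hM
  have hlim : Tendsto (fun m : ℕ => (c 0 + M * (ψ 1 - ψ 0)) / ψ (2 * (m / 2) + 1)) atTop (nhds 0) :=
    tendsto_const_nhds.div_atTop
      (htop.comp (tendsto_atTop_mono (fun m => by simp only [id]; omega) tendsto_id))
  exact squeeze_zero (fun m => (hbound m).1) (fun m => (hbound m).2) hlim

/-- Key asymptotic identity: for a nonincreasing nonnegative sequence `c` with
bounded `ψ`-Cesàro means, the dilation `σ₂` of the means
`n ↦ (1/ψ(2n+1)) ∑_{k=0}^{2n+1} c(k)` differs from the means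
`n ↦ (1/ψ(n+1)) ∑_{k=0}^{n} c(k)` by a null sequence (an element of `c₀`).
Here `ψ : ℕ → (0,∞)` is increasing, concave (nonincreasing increments) and
unbounded, and `ω` is a singular dilation-invariant state with
`ω({ψ(2n+1)/ψ(n+1)}) = 1`. -/
theorem dilated_means_sub_means_null (S : LinfState)
    (hsing : ∀ x : ℕ → ℝ, Bdd x → Tendsto x atTop (nhds 0) → S.toFun x = 0)
    (hdilinv : ∀ n : ℕ, 1 ≤ n → ∀ x : ℕ → ℝ, Bdd x →
      S.toFun (fun k => x (k / n)) = S.toFun x)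
    (ψ : ℕ → ℝ) (hpos : ∀ n : ℕ, 1 ≤ n → 0 < ψ n)
    (hincr : Monotone ψ)
    (hconc : Antitone (fun n => ψ (n + 1) - ψ n))
    (htop : Tendsto ψ atTop atTop)
    (hω1 : S.toFun (fun n => ψ (2 * n + 1) / ψ (n + 1)) = 1)
    (c : ℕ → ℝ) (hc : Antitone c) (hc0 : ∀ k, 0 ≤ c k)
    (hbdd : ∃ M : ℝ, ∀ n, (∑ k ∈ Finset.range (n + 1), c k) ≤ M * ψ (n + 1)) :
    Tendsto (fun m : ℕ =>
        (∑ k ∈ Finset.range (2 * (m / 2) + 2), c k) / ψ (2 * (m / 2) + 1) -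
          (∑ k ∈ Finset.range (m + 1), c k) / ψ (m + 1))
      atTop (nhds 0) :=
  dilated_means_sub_means_null_general ψ hpos hincr hconc htop c hc hc0 hbdd
end

section
/- Let E be a fully symmetric ideal of nonincreasing-rearrangement-closed sequences in c₀, with a fully symmetric positive trace φ (φ(b) ≤ φ(a) whenever 0 ≤ b ≺≺ a). Suppose φ is relatively normal with respect to a Marcinkiewicz ideal m_ψ ⊆ E, meaning φ(a) = sup{φ(b) : b ∈ m_ψ, 0 ≤ b ≺≺ a} for all nonincreasing 0 ≤ a ∈ E, where m_ψ = {b : sup_n (1/ψ(n+1)) ∑_{k=0}^{n} μ(k,b) < ∞}. Let w be the nonincreasing sequence w(n) = ψ(n+1) − ψ(n) (ψ(0)=0), so w ∈ m_ψ. Then for every nonincreasing 0 ≤ a ∈ E, φ(a) = lim_{m→∞} φ(a ∧ m·w), where a ∧ m·w denotes any nonincreasing nonnegative sequence whose partial sums equal min{∑_{k=0}^{n} a(k), m·ψ(n+1)} for every n. -/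
open Filter

/-- Partial sums of a sequence: `P a n = ∑_{k=0}^{n} a(k)`. -/
def P (a : ℕ → ℝ) (n : ℕ) : ℝ := ∑ k ∈ Finset.range (n + 1), a k

open Topology

/-!
The truncations `a ∧ m·w` are submajorized by `a` and increase with `m`, so
`φ(a ∧ m·w)` increases to a limit at most `φ(a)`. Conversely, any `b ∈ m_ψ` with `b ≺≺ a` and
`∑_{k ≤ n} b(k) ≤ M ψ(n+1)` is submajorized by `a ∧ m·w` as soon as `m ≥ M`, so by relative
normality that limit is also at least `φ(a)`.
-/

theorem tendsto_csSup_of_monotone_of_cofinal {ι α : Type*} [Preorder ι] [Nonempty ι]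
    [ConditionallyCompleteLinearOrder α] [TopologicalSpace α] [OrderTopology α]
    {u : ι → α} {S : Set α} (hu : Monotone u) (hS : S.Nonempty) (hle : ∀ i, u i ≤ sSup S)
    (hcofinal : ∀ r ∈ S, ∃ i, r ≤ u i) :
    Tendsto u atTop (𝓝 (sSup S)) := by
  have hbdd : BddAbove (Set.range u) := ⟨sSup S, Set.forall_mem_range.2 hle⟩
  have hsup : ⨆ i, u i = sSup S := by
    refine le_antisymm (ciSup_le hle) (csSup_le hS fun r hr => ?_)
    obtain ⟨i, hi⟩ := hcofinal r hr
    exact hi.trans (le_ciSup hbdd i)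
  simpa only [hsup] using tendsto_atTop_ciSup hu hbdd

theorem P_zero (n : ℕ) : P 0 n = 0 := by
  simp only [P, Pi.zero_apply, Finset.sum_const_zero]

theorem P_nonneg {a : ℕ → ℝ} (ha : ∀ k, 0 ≤ a k) (n : ℕ) : 0 ≤ P a n :=
  Finset.sum_nonneg fun k _ => ha k

theorem relatively_normal_lim_general (E : Set (ℕ → ℝ)) (φ : (ℕ → ℝ) → ℝ)
    (ψ : ℕ → ℝ) (hψpos : ∀ n : ℕ, 1 ≤ n → 0 < ψ n)
    -- `E` is fully symmetric: closed under Hardy–Littlewood submajorization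
    (hEsub : ∀ a ∈ E, Antitone a → (∀ k, 0 ≤ a k) →
      ∀ b : ℕ → ℝ, Antitone b → (∀ k, 0 ≤ b k) →
        (∀ n, P b n ≤ P a n) → b ∈ E)
    -- the Marcinkiewicz ideal `m_ψ` is contained in `E`
    (hMψE : ∀ b : ℕ → ℝ, Antitone b → (∀ k, 0 ≤ b k) →
      (∃ M : ℝ, ∀ n, P b n ≤ M * ψ (n + 1)) → b ∈ E)
    -- `φ` is fully symmetric (positive and monotone for submajorization)
    (hφ : ∀ a ∈ E, ∀ b ∈ E, Antitone a → (∀ k, 0 ≤ a k) →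
      Antitone b → (∀ k, 0 ≤ b k) → (∀ n, P b n ≤ P a n) → φ b ≤ φ a)
    -- `φ` is relatively normal with respect to `m_ψ`
    (hnorm : ∀ a ∈ E, Antitone a → (∀ k, 0 ≤ a k) →
      φ a = sSup {r : ℝ | ∃ b : ℕ → ℝ, Antitone b ∧ (∀ k, 0 ≤ b k) ∧
        (∃ M : ℝ, ∀ n, P b n ≤ M * ψ (n + 1)) ∧
        (∀ n, P b n ≤ P a n) ∧ r = φ b})
    (a : ℕ → ℝ) (haE : a ∈ E) (ha : Antitone a) (ha0 : ∀ k, 0 ≤ a k)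
    (g : ℕ → ℕ → ℝ)
    (hg : ∀ m : ℕ, Antitone (g m) ∧ (∀ k, 0 ≤ g m k) ∧
      ∀ n, P (g m) n = min (P a n) ((m : ℝ) * ψ (n + 1))) :
    Tendsto (fun m : ℕ => φ (g m)) atTop (nhds (φ a)) := by
  choose hganti hg0 hgP using hg
  have hψ (n : ℕ) : 0 ≤ ψ (n + 1) := (hψpos _ n.succ_pos).le
  have hgE (m : ℕ) : g m ∈ E :=
    hEsub a haE ha ha0 _ (hganti m) (hg0 m) fun n => (hgP m n).trans_le (min_le_left _ _)
  have hφg {b : ℕ → ℝ} (m : ℕ) (hbE : b ∈ E) (hb : Antitone b) (hb0 : ∀ k, 0 ≤ b k)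
      (hbg : ∀ n, P b n ≤ min (P a n) ((m : ℝ) * ψ (n + 1))) : φ b ≤ φ (g m) :=
    hφ _ (hgE m) _ hbE (hganti m) (hg0 m) hb hb0 fun n => (hbg n).trans_eq (hgP m n).symm
  have hφa (m : ℕ) : φ (g m) ≤ φ a :=
    hφ a haE _ (hgE m) ha ha0 (hganti m) (hg0 m) fun n => (hgP m n).trans_le (min_le_left _ _)
  rw [hnorm a haE ha ha0] at hφa ⊢
  refine tendsto_csSup_of_monotone_of_cofinal (fun m m' hm => ?_) ?_ hφa ?_
  · refine hφg m' (hgE m) (hganti m) (hg0 m) fun n => (hgP m n).trans_le ?_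
    gcongr
    exact hψ n
  · exact ⟨_, 0, antitone_const, fun _ => le_rfl, ⟨0, fun n => by rw [P_zero, zero_mul]⟩,
      fun n => (P_zero n).trans_le (P_nonneg ha0 n), rfl⟩
  · rintro _ ⟨b, hb, hb0, ⟨M, hM⟩, hba, rfl⟩
    refine ⟨⌈M⌉₊, hφg _ (hMψE b hb hb0 ⟨M, hM⟩) hb hb0 fun n => le_min (hba n) ?_⟩
    exact (hM n).trans (mul_le_mul_of_nonneg_right (Nat.le_ceil M) (hψ n))

/-- If `φ` is a fully symmetric positive functional on a fully symmetric
sequence ideal `E` which is relatively normal with respect to the Marcinkiewicz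
ideal `m_ψ ⊆ E` (with weight increments `w(n) = ψ(n+1) − ψ(n)`, `ψ(0) = 0`),
then for every nonincreasing nonnegative `a ∈ E`,
`φ(a) = lim_{m→∞} φ(a ∧ m·w)`, where `a ∧ m·w` is any nonincreasing
nonnegative sequence whose partial sums are `min{∑_{k≤n} a(k), m·ψ(n+1)}`. -/
theorem relatively_normal_lim (E : Set (ℕ → ℝ)) (φ : (ℕ → ℝ) → ℝ)
    (ψ : ℕ → ℝ) (hψ0 : ψ 0 = 0) (hψpos : ∀ n : ℕ, 1 ≤ n → 0 < ψ n)
    (hψmono : Monotone ψ) (hψconc : Antitone (fun n => ψ (n + 1) - ψ n))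
    -- `E` is fully symmetric: closed under Hardy–Littlewood submajorization
    (hEsub : ∀ a ∈ E, Antitone a → (∀ k, 0 ≤ a k) →
      ∀ b : ℕ → ℝ, Antitone b → (∀ k, 0 ≤ b k) →
        (∀ n, P b n ≤ P a n) → b ∈ E)
    -- the Marcinkiewicz ideal `m_ψ` is contained in `E`
    (hMψE : ∀ b : ℕ → ℝ, Antitone b → (∀ k, 0 ≤ b k) →
      (∃ M : ℝ, ∀ n, P b n ≤ M * ψ (n + 1)) → b ∈ E)
    -- `φ` is fully symmetric (positive and monotone for submajorization)
    (hφ : ∀ a ∈ E, ∀ b ∈ E, Antitone a → (∀ k, 0 ≤ a k) →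
      Antitone b → (∀ k, 0 ≤ b k) → (∀ n, P b n ≤ P a n) → φ b ≤ φ a)
    -- `φ` is relatively normal with respect to `m_ψ`
    (hnorm : ∀ a ∈ E, Antitone a → (∀ k, 0 ≤ a k) →
      φ a = sSup {r : ℝ | ∃ b : ℕ → ℝ, Antitone b ∧ (∀ k, 0 ≤ b k) ∧
        (∃ M : ℝ, ∀ n, P b n ≤ M * ψ (n + 1)) ∧
        (∀ n, P b n ≤ P a n) ∧ r = φ b})
    (a : ℕ → ℝ) (haE : a ∈ E) (ha : Antitone a) (ha0 : ∀ k, 0 ≤ a k)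
    (g : ℕ → ℕ → ℝ)
    (hg : ∀ m : ℕ, Antitone (g m) ∧ (∀ k, 0 ≤ g m k) ∧
      ∀ n, P (g m) n = min (P a n) ((m : ℝ) * ψ (n + 1))) :
    Tendsto (fun m : ℕ => φ (g m)) atTop (nhds (φ a)) :=
  relatively_normal_lim_general E φ ψ hψpos hEsub hMψE hφ hnorm a haE ha ha0 g hg
end
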